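/- Let P ⊆ ℂ be a finite set and let 𝓑 be a finite family of distinct open subsets of ℂ such that: (i) every B ∈ 𝓑 has two distinct connected components each of which contains a point of P; and (ii) for any two distinct B, B′ ∈ 𝓑, either B ∩ B′ = ∅, or B is contained in some connected component of B′, or B′ is contained in some connected component of B. If 𝓑 is nonempty, then the number of elements of 𝓑 is strictly less than the number of elements of P. -/

import Mathlib

open Set

/-- `η` is a connected component of the set `S`. -/
def IsCompOf (η S : Set ℂ) : Prop := ∃ z ∈ S, η = connectedComponentIn S z

/-!
Induct on the family. Remove a lake `b` that is minimal for inclusion, together with one of the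
at least two postcritical points `p ≠ q` that it contains. Any other lake `b'` containing `p`
meets `b` and cannot lie inside `b`, so by non-entanglement `b` lies inside a single component
of `b'`; that component holds both `p` and `q`. Hence `b'` still separates the remaining points,
with `q` taking over the role of `p`.
-/

def Separates (P b : Set ℂ) : Prop :=
  ∃ c₁ c₂ : Set ℂ, IsCompOf c₁ b ∧ IsCompOf c₂ b ∧ c₁ ≠ c₂ ∧
    (c₁ ∩ P).Nonempty ∧ (c₂ ∩ P).Nonempty

def NonEntangled (b b' : Set ℂ) : Prop :=
  b ∩ b' = ∅ ∨ (∃ c : Set ℂ, IsCompOf c b' ∧ b ⊆ c) ∨ (∃ c : Set ℂ, IsCompOf c b ∧ b' ⊆ c)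

namespace IsCompOf

variable {c c₁ c₂ b : Set ℂ} {p : ℂ}

theorem subset (h : IsCompOf c b) : c ⊆ b := by
  obtain ⟨z, -, rfl⟩ := h
  exact connectedComponentIn_subset b z

theorem eq_of_mem (h₁ : IsCompOf c₁ b) (h₂ : IsCompOf c₂ b) (hp₁ : p ∈ c₁) (hp₂ : p ∈ c₂) :
    c₁ = c₂ := by
  obtain ⟨z₁, -, rfl⟩ := h₁
  obtain ⟨z₂, -, rfl⟩ := h₂
  exact (connectedComponentIn_eq hp₁).trans (connectedComponentIn_eq hp₂).symm

end IsCompOf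

namespace Separates

variable {P b : Set ℂ}

theorem exists_ne_mem (h : Separates P b) : ∃ p ∈ P, ∃ q ∈ P, p ≠ q ∧ p ∈ b ∧ q ∈ b := by
  obtain ⟨c₁, c₂, hc₁, hc₂, hne, ⟨p, hpc, hpP⟩, ⟨q, hqc, hqP⟩⟩ := h
  refine ⟨p, hpP, q, hqP, ?_, hc₁.subset hpc, hc₂.subset hqc⟩
  rintro rfl
  exact hne (hc₁.eq_of_mem hc₂ hpc hqc)

theorem nonempty (h : Separates P b) : P.Nonempty :=
  let ⟨p, hp, _⟩ := h.exists_ne_mem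
  ⟨p, hp⟩

theorem sdiff_singleton {p q : ℂ} (h : Separates P b) (hq : q ∈ P) (hqp : q ≠ p)
    (hpq : ∀ c, IsCompOf c b → p ∈ c → q ∈ c) : Separates (P \ {p}) b := by
  obtain ⟨c₁, c₂, hc₁, hc₂, hne, hP₁, hP₂⟩ := h
  have keep : ∀ c, IsCompOf c b → (c ∩ P).Nonempty → (c ∩ (P \ {p})).Nonempty := by
    rintro c hc ⟨r, hrc, hrP⟩
    by_cases hr : r = p
    · subst hr
      exact ⟨q, hpq c hc hrc, hq, hqp⟩
    · exact ⟨r, hrc, hrP, hr⟩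
  exact ⟨c₁, c₂, hc₁, hc₂, hne, keep c₁ hc₁ hP₁, keep c₂ hc₂ hP₂⟩

end Separates

theorem NonEntangled.exists_subset_comp {b b' : Set ℂ} {p : ℂ} (h : NonEntangled b b')
    (hb' : ¬ b' ⊆ b) (hp : p ∈ b) (hp' : p ∈ b') : ∃ c, IsCompOf c b' ∧ b ⊆ c := by
  rcases h with hdisj | hsub | ⟨c, hc, hb'c⟩
  · exact absurd (hdisj ▸ mem_inter hp hp') (notMem_empty p)
  · exact hsub
  · exact absurd (hb'c.trans hc.subset) hb'

theorem card_add_one_le_ncard (B : Finset (Set ℂ)) (P : Set ℂ) (hP : P.Finite)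
    (hPne : P.Nonempty) (hsep : ∀ b ∈ B, Separates P b)
    (hnest : ∀ b ∈ B, ∀ b' ∈ B, b ≠ b' → NonEntangled b b') :
    B.card + 1 ≤ P.ncard := by
  induction B using Finset.strongInduction generalizing P with
  | H B ih =>
  rcases B.eq_empty_or_nonempty with rfl | hBne
  · simp only [Finset.card_empty, zero_add]
    exact (ncard_pos hP).2 hPne
  obtain ⟨b, hb⟩ := B.exists_minimal hBne
  obtain ⟨p, hpP, q, hqP, hpq, hpb, hqb⟩ := (hsep b hb.prop).exists_ne_mem
  have hsep' : ∀ b' ∈ B.erase b, Separates (P \ {p}) b' := by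
    intro b' hb'
    obtain ⟨hb'b, hb'B⟩ := Finset.mem_erase.1 hb'
    refine (hsep b' hb'B).sdiff_singleton hqP hpq.symm fun c' hc' hpc' => ?_
    have hb'_not_sub : ¬ b' ⊆ b := fun hsub => hb'b (hb.eq_of_le hb'B hsub)
    obtain ⟨c, hc, hbc⟩ := (hnest b hb.prop b' hb'B (Ne.symm hb'b)).exists_subset_comp
      hb'_not_sub hpb (hc'.subset hpc')
    exact hc'.eq_of_mem hc hpc' (hbc hpb) ▸ hbc hqb
  have hcard := ih _ (Finset.erase_ssubset hb.prop) (P \ {p}) hP.sdiff ⟨q, hqP, hpq.symm⟩ hsep'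
    fun x hx y hy => hnest x (Finset.mem_of_mem_erase hx) y (Finset.mem_of_mem_erase hy)
  rw [← Finset.card_erase_add_one hb.prop, ← ncard_sdiff_singleton_add_one hpP hP]
  omega

theorem stmt7_general (P : Set ℂ) (hP : P.Finite) (B : Finset (Set ℂ))
    (hsep : ∀ b ∈ B, ∃ c₁ c₂ : Set ℂ, IsCompOf c₁ b ∧ IsCompOf c₂ b ∧ c₁ ≠ c₂ ∧
      (c₁ ∩ P).Nonempty ∧ (c₂ ∩ P).Nonempty)
    (hnest : ∀ b ∈ B, ∀ b' ∈ B, b ≠ b' →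
      b ∩ b' = ∅ ∨ (∃ c : Set ℂ, IsCompOf c b' ∧ b ⊆ c) ∨
        (∃ c : Set ℂ, IsCompOf c b ∧ b' ⊆ c))
    (hne : B.Nonempty) :
    B.card < P.ncard := by
  obtain ⟨b, hb⟩ := hne
  exact card_add_one_le_ncard B P hP (Separates.nonempty (hsep b hb)) hsep hnest

theorem stmt7 (P : Set ℂ) (hP : P.Finite) (B : Finset (Set ℂ))
    (hopen : ∀ b ∈ B, IsOpen b)
    (hsep : ∀ b ∈ B, ∃ c₁ c₂ : Set ℂ, IsCompOf c₁ b ∧ IsCompOf c₂ b ∧ c₁ ≠ c₂ ∧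
      (c₁ ∩ P).Nonempty ∧ (c₂ ∩ P).Nonempty)
    (hnest : ∀ b ∈ B, ∀ b' ∈ B, b ≠ b' →
      b ∩ b' = ∅ ∨ (∃ c : Set ℂ, IsCompOf c b' ∧ b ⊆ c) ∨
        (∃ c : Set ℂ, IsCompOf c b ∧ b' ⊆ c))
    (hne : B.Nonempty) :
    B.card < P.ncard :=
  stmt7_general P hP B hsep hnest hne
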